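/- Let L_δ : L²([0,1]) → L²([0,1]), δ ∈ [0, δ̄) with δ̄ > 0, be a family of compact, integral-preserving bounded linear operators such that L₀ satisfies the mixing condition (A1), and let f₀ be the unique fixed point of L₀ with ∫ f₀ dm = 1. Assume: (a) there exists K ≥ 0 with ‖L_δ − L₀‖_{L²→L²} ≤ K δ for all δ ∈ [0, δ̄); (b) there exists f̂ ∈ V with ‖(L_δ − L₀) f₀ / δ − f̂‖₂ → 0 as δ → 0⁺. Then there exists δ₂ > 0 such that for each δ ∈ [0, δ₂) the operator L_δ has a unique fixed point f_δ with ∫ f_δ dm = 1; moreover ‖(f_δ − f₀)/δ − h‖₂ → 0 as δ → 0⁺, where h is the unique element of V satisfying h − L₀ h = f̂. -/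

import Mathlib

open MeasureTheory

/-- Lebesgue measure restricted to the unit interval `[0,1]`. -/
noncomputable def μ01 : Measure ℝ := volume.restrict (Set.Icc (0 : ℝ) 1)

/-!
Writing `Il` for the integral, replace `L δ` by its Wielandt deflation `L δ - f₀ ⊗ Il`, which
removes the eigenvalue `1` at `f₀`: the normalized fixed points of `L δ` are exactly the solutions
of `B δ f = f₀`, where `B δ = 1 - (L δ - f₀ ⊗ Il)`. The deflation of `L 0` is compact and, by
mixing, has no nonzero fixed vector, so `B 0` is invertible by the Fredholm alternative. Since
`L δ → L 0` in operator norm, `B δ` stays invertible for small `δ`, and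
`(f_δ - f₀) / δ = B δ⁻¹ ((L δ - L 0) f₀ / δ) → B 0⁻¹ f̂ = h` by continuity of inversion.
-/

open Filter Topology Set

section Deflation

variable {𝕜 E : Type*} [NontriviallyNormedField 𝕜] [NormedAddCommGroup E] [NormedSpace 𝕜 E]

def deflation (Il : E →L[𝕜] 𝕜) (f₀ : E) (A : E →L[𝕜] E) : E →L[𝕜] E :=
  A - Il.smulRight f₀

variable (Il : E →L[𝕜] 𝕜) (f₀ : E) {A : E →L[𝕜] E}

@[simp]
theorem deflation_apply (g : E) : deflation Il f₀ A g = A g - Il g • f₀ := rfl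

theorem IsCompactOperator.deflation [LocallyCompactSpace 𝕜] (hA : IsCompactOperator A) :
    IsCompactOperator (deflation Il f₀ A) :=
  hA.sub ((isCompactOperator_of_locallyCompactSpace_dom Il).clm_comp
    (ContinuousLinearMap.toSpanSingleton 𝕜 f₀))

variable {Il f₀}

theorem one_sub_deflation_apply_eq_iff (hA : ∀ g, Il (A g) = Il g) (hf₀ : Il f₀ = 1) (f : E) :
    (1 - deflation Il f₀ A) f = f₀ ↔ A f = f ∧ Il f = 1 := by
  simp only [sub_apply, one_apply_eq_self, deflation_apply]
  constructor
  · intro h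
    have hIl : Il f = 1 := by simpa [hA, hf₀] using congrArg Il h
    rw [hIl, one_smul] at h
    exact ⟨by linear_combination (norm := module) -h, hIl⟩
  · rintro ⟨hfix, hIl⟩
    rw [hfix, hIl, one_smul, sub_sub_cancel]

theorem eq_zero_of_deflation_apply_eq_self (hA : ∀ g, Il (A g) = Il g) (hf₀ : Il f₀ = 1)
    (hV : ∀ g, Il g = 0 → A g = g → g = 0) {g : E} (hg : deflation Il f₀ A g = g) : g = 0 := by
  have hIl : Il g = 0 := by simpa [hA, hf₀, eq_comm] using congrArg Il hg
  rw [deflation_apply, hIl, zero_smul, sub_zero] at hg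
  exact hV g hIl hg

theorem isUnit_one_sub_deflation [CompleteSpace E] [LocallyCompactSpace 𝕜]
    (hcomp : IsCompactOperator A) (hA : ∀ g, Il (A g) = Il g) (hf₀ : Il f₀ = 1)
    (hV : ∀ g, Il g = 0 → A g = g → g = 0) : IsUnit (1 - deflation Il f₀ A) := by
  refine ((hcomp.deflation Il f₀).hasEigenvalue_or_mem_resolventSet one_ne_zero).elim
    (fun h => ?_) (by simpa [spectrum.mem_resolventSet_iff] using ·)
  obtain ⟨g, hg⟩ := h.exists_hasEigenvector
  exact absurd (eq_zero_of_deflation_apply_eq_self hA hf₀ hV (by simpa using hg.apply_eq_smul))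
    hg.2

theorem sub_eq_inverse_one_sub_deflation_apply {A₀ : E →L[𝕜] E} (hf₀ : Il f₀ = 1)
    (hA₀ : A₀ f₀ = f₀) (hB : IsUnit (1 - deflation Il f₀ A)) {f : E}
    (hf : (1 - deflation Il f₀ A) f = f₀) :
    f - f₀ = Ring.inverse (1 - deflation Il f₀ A) ((A - A₀) f₀) := by
  have hdiff : (1 - deflation Il f₀ A) (f - f₀) = (A - A₀) f₀ := by
    rw [map_sub, hf]
    simp only [sub_apply, one_apply_eq_self, deflation_apply, hf₀, one_smul, hA₀]
    abel
  rw [← hdiff, ← mul_apply_eq_comp, Ring.inverse_mul_cancel _ hB, one_apply_eq_self]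

end Deflation

theorem ContinuousLinearMap.eq_zero_of_apply_eq_self_of_tendsto {𝕜 E : Type*}
    [NontriviallyNormedField 𝕜] [NormedAddCommGroup E] [NormedSpace 𝕜 E] {A : E →L[𝕜] E} {g : E}
    (hg : A g = g) (h : Tendsto (fun n : ℕ => ‖(A ^ n) g‖) atTop (𝓝 0)) : g = 0 := by
  have hpow (n : ℕ) : (A ^ n) g = g := by
    induction n with
    | zero => rfl
    | succ n ih => rw [pow_succ, mul_apply_eq_comp, hg, ih]
  simp only [hpow] at h
  exact norm_eq_zero.mp (tendsto_nhds_unique tendsto_const_nhds h)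

theorem tendsto_nhdsGE_zero_of_norm_sub_le {F : Type*} [SeminormedAddCommGroup F] {g : ℝ → F}
    {b K : ℝ} (hb : 0 < b) (h : ∀ δ ∈ Ico 0 b, ‖g δ - g 0‖ ≤ K * δ) :
    Tendsto g (𝓝[≥] 0) (𝓝 (g 0)) := by
  have hK : Tendsto (fun δ : ℝ => K * δ) (𝓝[≥] 0) (𝓝 0) :=
    tendsto_nhdsWithin_of_tendsto_nhds (by simpa using (continuous_const_mul K).tendsto 0)
  exact tendsto_iff_norm_sub_tendsto_zero.mpr <| squeeze_zero' (.of_forall fun _ => norm_nonneg _)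
    (eventually_of_mem (Ico_mem_nhdsGE hb) h) hK

theorem exists_forall_Ico_isUnit {R : Type*} [NormedRing R] [CompleteSpace R] {F : ℝ → R}
    (hF : Tendsto F (𝓝[≥] 0) (𝓝 (F 0))) (h0 : IsUnit (F 0)) :
    ∃ u > 0, ∀ δ ∈ Ico 0 u, IsUnit (F δ) :=
  mem_nhdsGE_iff_exists_Ico_subset.mp (hF (Units.isOpen.mem_nhds h0))

theorem Filter.Tendsto.ring_inverse {R α : Type*} [NormedRing R] [CompleteSpace R] {l : Filter α}
    {F : α → R} {x : R} (hF : Tendsto F l (𝓝 x)) (hx : IsUnit x) :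
    Tendsto (fun a => Ring.inverse (F a)) l (𝓝 (Ring.inverse x)) := by
  obtain ⟨u, rfl⟩ := hx
  exact (NormedRing.inverse_continuousAt u).tendsto.comp hF

theorem Filter.Tendsto.clm_apply {𝕜 E F α : Type*} [NontriviallyNormedField 𝕜]
    [NormedAddCommGroup E] [NormedSpace 𝕜 E] [NormedAddCommGroup F] [NormedSpace 𝕜 F]
    {l : Filter α} {T : α → E →L[𝕜] F} {g : α → E} {T₀ : E →L[𝕜] F} {g₀ : E}
    (hT : Tendsto T l (𝓝 T₀)) (hg : Tendsto g l (𝓝 g₀)) :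
    Tendsto (fun a => T a (g a)) l (𝓝 (T₀ g₀)) :=
  (isBoundedBilinearMap_apply.continuous.tendsto _).comp (hT.prodMk_nhds hg)

theorem linear_response {E : Type*} [NormedAddCommGroup E] [NormedSpace ℝ E] [CompleteSpace E]
    (Il : E →L[ℝ] ℝ) {δbar : ℝ} (hδbar : 0 < δbar) {L : ℝ → E →L[ℝ] E}
    (hcomp : IsCompactOperator (L 0)) (hint : ∀ δ ∈ Ico (0 : ℝ) δbar, ∀ g, Il (L δ g) = Il g)
    (hV : ∀ g, Il g = 0 → L 0 g = g → g = 0)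
    {f₀ : E} (hf₀fix : L 0 f₀ = f₀) (hf₀int : Il f₀ = 1) {K : ℝ}
    (hLip : ∀ δ ∈ Ico (0 : ℝ) δbar, ‖L δ - L 0‖ ≤ K * δ) {fhat : E}
    (hderiv : Tendsto (fun δ : ℝ => δ⁻¹ • (L δ - L 0) f₀) (𝓝[>] 0) (𝓝 fhat)) :
    ∃ δ₂, 0 < δ₂ ∧ δ₂ ≤ δbar ∧ (∀ δ ∈ Ico 0 δ₂, ∃! f, L δ f = f ∧ Il f = 1) ∧
      ∀ fam : ℝ → E, (∀ δ ∈ Ico 0 δ₂, L δ (fam δ) = fam δ ∧ Il (fam δ) = 1) →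
        ∀ h, Il h = 0 → h - L 0 h = fhat →
          Tendsto (fun δ => δ⁻¹ • (fam δ - f₀)) (𝓝[>] 0) (𝓝 h) := by
  set B : ℝ → E →L[ℝ] E := fun δ => 1 - deflation Il f₀ (L δ)
  have hB0 : IsUnit (B 0) := isUnit_one_sub_deflation hcomp (hint 0 ⟨le_rfl, hδbar⟩) hf₀int hV
  have hB : Tendsto B (𝓝[≥] 0) (𝓝 (B 0)) :=
    ((continuous_const.sub (continuous_id.sub continuous_const)).tendsto _).comp
      (tendsto_nhdsGE_zero_of_norm_sub_le hδbar hLip)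
  obtain ⟨u, hu, hBu⟩ := exists_forall_Ico_isUnit hB hB0
  set δ₂ := min u δbar
  have hδ₂ : ∀ δ ∈ Ico 0 δ₂, IsUnit (B δ) ∧ ∀ f, (L δ f = f ∧ Il f = 1 ↔ B δ f = f₀) :=
    fun δ hδ => ⟨hBu δ ⟨hδ.1, hδ.2.trans_le (min_le_left _ _)⟩, fun f =>
      (one_sub_deflation_apply_eq_iff (hint δ ⟨hδ.1, hδ.2.trans_le (min_le_right _ _)⟩)
        hf₀int f).symm⟩
  refine ⟨δ₂, lt_min hu hδbar, min_le_right _ _, fun δ hδ => ?_, fun fam hfam h hh0 hh => ?_⟩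
  · simpa only [(hδ₂ δ hδ).2] using
      (ContinuousLinearMap.isUnit_iff_bijective.mp (hδ₂ δ hδ).1).existsUnique f₀
  have hresp : ∀ δ ∈ Ioo 0 δ₂,
      Ring.inverse (B δ) (δ⁻¹ • (L δ - L 0) f₀) = δ⁻¹ • (fam δ - f₀) := fun δ hδ => by
    obtain ⟨hBδ, hfixδ⟩ := hδ₂ δ (Ioo_subset_Ico_self hδ)
    rw [map_smul, sub_eq_inverse_one_sub_deflation_apply hf₀int hf₀fix hBδ
      ((hfixδ _).mp (hfam δ (Ioo_subset_Ico_self hδ)))]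
  have hh' : Ring.inverse (B 0) fhat = h := by
    have hBh : B 0 h = fhat := by simp [B, hh0, hh]
    rw [← hBh, ← mul_apply_eq_comp, Ring.inverse_mul_cancel _ hB0, one_apply_eq_self]
  rw [← hh']
  exact ((hB.mono_left (nhdsWithin_mono _ Ioi_subset_Ici_self)).ring_inverse hB0).clm_apply hderiv
    |>.congr' (eventually_of_mem (Ioo_mem_nhdsGT (lt_min hu hδbar)) hresp)

theorem MeasureTheory.L2.exists_continuousLinearMap_eq_integral {α : Type*} [MeasurableSpace α]
    {μ : Measure α} (hμ : μ univ ≠ ⊤) :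
    ∃ Il : Lp ℝ 2 μ →L[ℝ] ℝ, ∀ g : Lp ℝ 2 μ, Il g = ∫ x, g x ∂μ :=
  ⟨innerSL ℝ (indicatorConstLp 2 MeasurableSet.univ hμ 1), fun g => by
    simpa using L2.inner_indicatorConstLp_one MeasurableSet.univ hμ g⟩

theorem linear_response_invariant_density
    (δbar : ℝ) (hδbar : 0 < δbar)
    (L : ℝ → (Lp ℝ 2 μ01 →L[ℝ] Lp ℝ 2 μ01))
    (hcomp : ∀ δ ∈ Set.Ico (0 : ℝ) δbar, IsCompactOperator (L δ))
    (hint : ∀ δ ∈ Set.Ico (0 : ℝ) δbar, ∀ g : Lp ℝ 2 μ01,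
      ∫ x, (L δ g) x ∂μ01 = ∫ x, g x ∂μ01)
    (hmix : ∀ g : Lp ℝ 2 μ01, (∫ x, g x ∂μ01) = 0 →
      Filter.Tendsto (fun n : ℕ => ‖((L 0) ^ n) g‖) Filter.atTop (nhds 0))
    (f₀ : Lp ℝ 2 μ01) (hf₀fix : L 0 f₀ = f₀) (hf₀int : ∫ x, f₀ x ∂μ01 = 1)
    (K : ℝ)
    (hLip : ∀ δ ∈ Set.Ico (0 : ℝ) δbar, ‖L δ - L 0‖ ≤ K * δ)
    (fhat : Lp ℝ 2 μ01)
    (hderiv : Filter.Tendsto (fun δ : ℝ => ‖δ⁻¹ • ((L δ - L 0) f₀) - fhat‖)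
      (nhdsWithin 0 (Set.Ioi 0)) (nhds 0)) :
    ∃ δ₂ : ℝ, 0 < δ₂ ∧ δ₂ ≤ δbar ∧
      (∀ δ ∈ Set.Ico (0 : ℝ) δ₂,
        ∃! fδ : Lp ℝ 2 μ01, L δ fδ = fδ ∧ ∫ x, fδ x ∂μ01 = 1) ∧
      (∀ fam : ℝ → Lp ℝ 2 μ01,
        (∀ δ ∈ Set.Ico (0 : ℝ) δ₂, L δ (fam δ) = fam δ ∧ ∫ x, (fam δ) x ∂μ01 = 1) →
        ∀ h : Lp ℝ 2 μ01, (∫ x, h x ∂μ01) = 0 → h - L 0 h = fhat →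
          Filter.Tendsto (fun δ : ℝ => ‖δ⁻¹ • (fam δ - f₀) - h‖)
            (nhdsWithin 0 (Set.Ioi 0)) (nhds 0)) := by
  obtain ⟨Il, hIl⟩ := L2.exists_continuousLinearMap_eq_integral (μ := μ01) (by simp [μ01])
  simp only [← hIl] at hint hmix hf₀int ⊢
  obtain ⟨δ₂, hδ₂, hδ₂le, hunique, hresp⟩ := linear_response Il hδbar
    (hcomp 0 ⟨le_rfl, hδbar⟩) hint
    (fun g hg hfix => (L 0).eq_zero_of_apply_eq_self_of_tendsto hfix (hmix g hg))
    hf₀fix hf₀int hLip (tendsto_iff_norm_sub_tendsto_zero.mpr hderiv)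
  exact ⟨δ₂, hδ₂, hδ₂le, hunique, fun fam hfam h hh0 hh =>
    tendsto_iff_norm_sub_tendsto_zero.mp (hresp fam hfam h hh0 hh)⟩
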